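/- arXiv:2007.05819 — 2 statements merged into one kernel-verified Lean document; each statement's English description precedes it below -/
import Mathlib

section
/- Let n > 2, G = C_{2^n} = ⟨a⟩, F a finite field of characteristic 2, and σ₄ the involution induced by a ↦ a^{2^{n-1}+1}. For x = Σ_{i=0}^{2^n-1} α_i a^i, the coefficient of a^{4t} in x·x^{σ₄} equals (α_{2t} + α_{2t+2^{n-1}})², where indices are taken modulo 2^n. -/
/-!
With `c = 2^(n-1) + 1`, the coefficient of `a^(4t)` in `x * σ₄ x` is `∑ i, α_i α_(4t - c i)`.
Since `c² = 1` and `c` fixes `4t`, the map `i ↦ 4t - c i` is an involution, so in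
characteristic 2 the terms off its fixed points cancel in pairs and the coefficient is the sum of
`α_i²` over the fixed points. These solve `(2 + 2^(n-1)) (i - 2t) = 0`; for `n ≥ 3` the factor
`1 + 2^(n-2)` is a unit, so they are `i = 2t` and `i = 2t + 2^(n-1)`, and
`α² + β² = (α + β)²` finishes the proof.
-/

open AddMonoidAlgebra

/-- The group algebra of the cyclic group of order `2^n` over `F`. -/
abbrev GA (F : Type) [Field F] (n : ℕ) := AddMonoidAlgebra F (ZMod (2^n))

/-- The ring endomorphism of `GA F n` induced by the group endomorphism
`a^i ↦ a^(c*i)` (written additively: `i ↦ c * i`). -/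
noncomputable def sigma (F : Type) [Field F] (n : ℕ) (c : ZMod (2^n)) :
    GA F n →+* GA F n :=
  AddMonoidAlgebra.mapDomainRingHom F (AddMonoidHom.mulLeft c)

/-- The augmentation map of the group algebra. -/
noncomputable def aug (F : Type) [Field F] (n : ℕ) : GA F n →+* F :=
  ((AddMonoidAlgebra.lift F F (ZMod (2^n))) 1).toRingHom

/-- The group `V(FG)` of normalized units. -/
noncomputable def V (F : Type) [Field F] (n : ℕ) : Subgroup (GA F n)ˣ :=
  (Units.map (aug F n).toMonoidHom).ker

/-- The unitary subgroup `V_σ(FG)` of normalized units `u` with `σ(u) = u⁻¹`,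
for the involution `σ` induced by `a ↦ a^c`. -/
noncomputable def Vsig (F : Type) [Field F] (n : ℕ) (c : ZMod (2^n)) :
    Subgroup (GA F n)ˣ :=
  V F n ⊓ MonoidHom.ker (Units.map (sigma F n c).toMonoidHom * MonoidHom.id _)

open Finset

theorem CharTwo.sum_mul_comp_involutive {R ι : Type*} [CommSemiring R] [CharP R 2] [Fintype ι]
    [DecidableEq ι] {φ : ι → ι} (hφ : Function.Involutive φ) (f : ι → R) :
    ∑ i, f i * f (φ i) = ∑ i with φ i = i, f i ^ 2 := by
  have hmoved : ∑ i with φ i ≠ i, f i * f (φ i) = 0 := by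
    refine sum_involution (fun i _ ↦ φ i) (fun i _ ↦ ?_) (fun i hi _ ↦ (mem_filter.1 hi).2)
      (fun i hi ↦ ?_) (fun i _ ↦ hφ i)
    · rw [hφ i, mul_comm (f (φ i)), CharTwo.add_self_eq_zero]
    · simpa [hφ i, eq_comm] using hi
  rw [← sum_filter_add_sum_filter_not univ (fun i ↦ φ i = i), hmoved, add_zero]
  exact sum_congr rfl fun i hi ↦ by rw [(mem_filter.1 hi).2, sq]

theorem AddMonoidAlgebra.coeff_mul_eq_sum {k G : Type*} [Semiring k] [AddGroup G] [Fintype G]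
    (x y : AddMonoidAlgebra k G) (g : G) :
    (x * y).coeff g = ∑ h, x.coeff h * y.coeff (-h + g) := by
  rw [coeff_mul_apply_left, Finsupp.sum_fintype]
  simp

namespace ZMod

variable {n : ℕ}

theorem two_pow_eq_zero_of_le {m : ℕ} (h : n ≤ m) : (2 : ZMod (2 ^ n)) ^ m = 0 := by
  obtain ⟨k, rfl⟩ := Nat.exists_eq_add_of_le h
  rw [pow_add, show (2 : ZMod (2 ^ n)) ^ n = 0 by exact_mod_cast ZMod.natCast_self (2 ^ n),
    zero_mul]

theorem two_pow_pred_ne_zero (hn : 1 ≤ n) : (2 : ZMod (2 ^ n)) ^ (n - 1) ≠ 0 := by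
  have : ((2 ^ (n - 1) : ℕ) : ZMod (2 ^ n)) ≠ 0 := by
    rw [Ne, ZMod.natCast_eq_zero_iff, Nat.pow_dvd_pow_iff_le_right one_lt_two]
    omega
  exact_mod_cast this

theorem two_mul_two_pow_pred (hn : 1 ≤ n) : (2 : ZMod (2 ^ n)) * 2 ^ (n - 1) = 0 := by
  rw [← pow_succ', Nat.sub_add_cancel hn]
  exact two_pow_eq_zero_of_le le_rfl

theorem two_mul_eq_zero_iff (hn : 1 ≤ n) (z : ZMod (2 ^ n)) :
    2 * z = 0 ↔ z = 0 ∨ z = 2 ^ (n - 1) := by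
  refine ⟨fun h ↦ ?_, ?_⟩
  · obtain ⟨m, rfl⟩ := Nat.exists_eq_add_of_le' hn
    have : NeZero (2 ^ (m + 1)) := ⟨by positivity⟩
    rw [← ZMod.natCast_zmod_val z] at h ⊢
    have hdvd : 2 ^ m ∣ z.val := by
      rw [← Nat.mul_dvd_mul_iff_left two_pos, ← pow_succ']
      exact (ZMod.natCast_eq_zero_iff _ _).1 (by exact_mod_cast h)
    obtain ⟨k, hk⟩ := hdvd
    have hk2 : k < 2 := by
      have := z.val_lt
      rw [hk, pow_succ'] at this
      nlinarith
    interval_cases k <;> simp [hk]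
  · rintro (rfl | rfl)
    · exact mul_zero 2
    · exact two_mul_two_pow_pred hn

theorem two_add_two_pow_pred_mul_eq_zero_iff (hn : 3 ≤ n) (z : ZMod (2 ^ n)) :
    (2 + 2 ^ (n - 1)) * z = 0 ↔ z = 0 ∨ z = 2 ^ (n - 1) := by
  have hsucc : (2 : ZMod (2 ^ n)) ^ (n - 2) * 2 = 2 ^ (n - 1) := by
    rw [← pow_succ]; congr 1; omega
  have hnil : (2 : ZMod (2 ^ n)) ^ (n - 2) * 2 ^ (n - 1) = 0 := by
    rw [← pow_add]; exact two_pow_eq_zero_of_le (by omega)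
  rw [← two_mul_eq_zero_iff (by omega)]
  constructor <;> intro h
  · linear_combination (1 - 2 ^ (n - 2)) * h + z * hsucc + z * hnil
  · linear_combination (1 + 2 ^ (n - 2)) * h - z * hsucc

theorem two_pow_pred_add_one_mul_self (hn : 2 ≤ n) :
    ((2 : ZMod (2 ^ n)) ^ (n - 1) + 1) * (2 ^ (n - 1) + 1) = 1 := by
  have hsq : (2 : ZMod (2 ^ n)) ^ (n - 1) * 2 ^ (n - 1) = 0 := by
    rw [← pow_add]; exact two_pow_eq_zero_of_le (by omega)
  linear_combination hsq + two_mul_two_pow_pred (n := n) (by omega)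

theorem four_mul_sub_two_pow_pred_add_one_mul_eq_self_iff (hn : 3 ≤ n) (s i : ZMod (2 ^ n)) :
    4 * s - (2 ^ (n - 1) + 1) * i = i ↔ i = 2 * s ∨ i = 2 * s + 2 ^ (n - 1) := by
  have h2e := two_mul_two_pow_pred (n := n) (by omega)
  rw [← sub_eq_zero (b := 2 * s), ← sub_eq_iff_eq_add',
    ← two_add_two_pow_pred_mul_eq_zero_iff hn]
  constructor <;> intro h <;> linear_combination -h - s * h2e

end ZMod

theorem coeff_sigma_of_mul_self_eq_one {F : Type} [Field F] {n : ℕ} {c : ZMod (2 ^ n)}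
    (hc : c * c = 1) (x : GA F n) (k : ZMod (2 ^ n)) :
    (sigma F n c x).coeff k = x.coeff (c * k) := by
  have hinv : Function.Involutive (c * ·) := fun i ↦ by simp only [← mul_assoc, hc, one_mul]
  conv_lhs => rw [← hinv k]
  exact Finsupp.mapDomain_apply hinv.injective x.coeff (c * k)

theorem sigma4_coeff_of_four_t_general (F : Type) [Field F] (hF : CharP F 2)
    (n : ℕ) (hn : 2 < n) (x : GA F n) (t : ℕ) :
    (x * sigma F n (2^(n-1) + 1) x).coeff ((4*t : ℕ) : ZMod (2^n)) =
      (x.coeff ((2*t : ℕ) : ZMod (2^n)) + x.coeff ((2*t + 2^(n-1) : ℕ) : ZMod (2^n)))^2 := by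
  set c : ZMod (2 ^ n) := 2 ^ (n - 1) + 1
  set φ : ZMod (2 ^ n) → ZMod (2 ^ n) := fun i ↦ 4 * t - c * i
  have hc : c * c = 1 := ZMod.two_pow_pred_add_one_mul_self (by omega)
  have h2e := ZMod.two_mul_two_pow_pred (n := n) (by omega)
  have hφ : Function.Involutive φ := fun i ↦ by
    linear_combination i * hc - 2 * t * h2e
  have hfixed : ({i | φ i = i} : Finset _) =
      {2 * (t : ZMod (2 ^ n)), 2 * (t : ZMod (2 ^ n)) + 2 ^ (n - 1)} := by
    ext i
    simp only [mem_filter, mem_univ, true_and, mem_insert, mem_singleton]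
    exact ZMod.four_mul_sub_two_pow_pred_add_one_mul_eq_self_iff hn t i
  have hne : 2 * (t : ZMod (2 ^ n)) ≠ 2 * t + 2 ^ (n - 1) := by
    simpa using ZMod.two_pow_pred_ne_zero (n := n) (by omega)
  have := hF
  calc (x * sigma F n c x).coeff ((4 * t : ℕ) : ZMod (2 ^ n))
      = ∑ i, x.coeff i * x.coeff (φ i) := by
        rw [coeff_mul_eq_sum]
        refine sum_congr rfl fun i _ ↦ ?_
        rw [coeff_sigma_of_mul_self_eq_one hc]
        congr 2
        push_cast
        linear_combination 2 * t * h2e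
    _ = ∑ i with φ i = i, x.coeff i ^ 2 := CharTwo.sum_mul_comp_involutive hφ _
    _ = _ := by
        rw [hfixed, sum_pair hne, CharTwo.add_sq]
        push_cast
        rfl

/-- For `σ₄ : a ↦ a^{2^{n-1}+1}`: the coefficient of `a^{4t}` in `x ⬝ x^{σ₄}`
equals `(α_{2t} + α_{2t+2^{n-1}})²`, indices modulo `2^n`. -/
theorem sigma4_coeff_of_four_t (F : Type) [Field F] [Fintype F] (hF : CharP F 2)
    (n : ℕ) (hn : 2 < n) (x : GA F n) (t : ℕ) :
    (x * sigma F n (2^(n-1) + 1) x).coeff ((4*t : ℕ) : ZMod (2^n)) =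
      (x.coeff ((2*t : ℕ) : ZMod (2^n)) + x.coeff ((2*t + 2^(n-1) : ℕ) : ZMod (2^n)))^2 :=
  sigma4_coeff_of_four_t_general F hF n hn x t
end

section
/- Let F be a finite field of characteristic 2, n > 2, G = C_{2^n} = ⟨a⟩, H = ⟨a^{2^{n-1}}⟩, Ĥ = 1 + a^{2^{n-1}}, and σ₃ the involution induced by a ↦ a^{2^{n-1}-1}. For any α ∈ F and 1 ≤ i ≤ 2^{n-2}-1, the element x = 1 + α(a^i + a^{2^{n-1}+i}) satisfies x·x^{σ₃} = 1 + α(a^i + a^{2^{n-1}-i})·Ĥ. -/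
open AddMonoidAlgebra

/-! With `h = 2^(n-1)` and `Ĥ = 1 + a^h`, the element is `x = 1 + α a^i Ĥ`. Since `h` has order
two and `a^{j h} Ĥ = Ĥ`, the map `σ₃ : a^j ↦ a^{(h-1) j}` fixes `Ĥ` and sends `a^i Ĥ` to
`a^{-i} Ĥ`. In characteristic two `Ĥ² = 2 Ĥ = 0`, so the cross term of `x σ₃(x)` vanishes and
`x σ₃(x) = 1 + α (a^i + a^{-i}) Ĥ`, which is the right-hand side because `a^{h-i} Ĥ = a^{-i} Ĥ`. -/

theorem one_add_mul_mul_one_add_mul_of_mul_self_eq_zero {R : Type*} [CommRing R] {e : R}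
    (he : e * e = 0) (p q : R) : (1 + p * e) * (1 + q * e) = 1 + (p + q) * e := by
  linear_combination p * q * he

theorem ZMod.natCast_two_pow_pred_add_self {n : ℕ} (hn : 1 ≤ n) :
    ((2 ^ (n - 1) : ℕ) : ZMod (2 ^ n)) + ((2 ^ (n - 1) : ℕ) : ZMod (2 ^ n)) = 0 := by
  rw [← Nat.cast_add, ← two_mul, ← pow_succ', Nat.sub_add_cancel hn, ZMod.natCast_self]

theorem ZMod.natCast_two_pow_pred_mul_self {n : ℕ} (hn : 2 ≤ n) :
    ((2 ^ (n - 1) : ℕ) : ZMod (2 ^ n)) * ((2 ^ (n - 1) : ℕ) : ZMod (2 ^ n)) = 0 := by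
  rw [← Nat.cast_mul, ← pow_add, ZMod.natCast_eq_zero_iff]
  exact pow_dvd_pow 2 (by omega)

namespace AddMonoidAlgebra

variable {k G : Type*} [CommRing k] [AddCommGroup G] {t : G}

theorem single_add_mul_one_add_single (ht : t + t = 0) (g : G) (r : k) :
    single (g + t) r * (1 + single t 1) = single g r * (1 + single t 1) := by
  simp only [mul_add, mul_one, single_mul_single]
  rw [add_assoc, ht, add_zero, add_comm]

theorem single_add_nsmul_mul_one_add_single (ht : t + t = 0) (g : G) (r : k) (m : ℕ) :
    single (g + m • t) r * (1 + single t 1) = single g r * (1 + single t 1) := by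
  induction m with
  | zero => rw [zero_smul, add_zero]
  | succ m ih => rw [succ_nsmul, ← add_assoc, single_add_mul_one_add_single ht, ih]

theorem one_add_single_mul_self [CharP k 2] (ht : t + t = 0) :
    (1 + single t (1 : k)) * (1 + single t 1) = 0 := by
  have hB : single t (1 : k) * single t 1 = 1 := by rw [single_mul_single, ht, mul_one, one_def]
  have hchar (x : k[G]) : x + x = 0 := by
    rw [← two_smul k x, CharTwo.two_eq_zero, zero_smul]
  linear_combination hB + hchar (1 + single t 1)

end AddMonoidAlgebra

theorem sigma_single (F : Type) [Field F] (n : ℕ) (c g : ZMod (2 ^ n)) (r : F) :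
    sigma F n c (single g r) = single (c * g) r := by
  simp [sigma]

theorem sigma3_generator_formula_general (F : Type) [Field F] (hF : CharP F 2)
    (n : ℕ) (hn : 2 < n) (α : F) (i : ℕ) :
    (1 + α • (AddMonoidAlgebra.single ((i : ℕ) : ZMod (2^n)) (1 : F) +
        AddMonoidAlgebra.single ((2^(n-1) + i : ℕ) : ZMod (2^n)) (1 : F))) *
      sigma F n (2^(n-1) - 1)
        (1 + α • (AddMonoidAlgebra.single ((i : ℕ) : ZMod (2^n)) (1 : F) +
          AddMonoidAlgebra.single ((2^(n-1) + i : ℕ) : ZMod (2^n)) (1 : F))) =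
    1 + α • ((AddMonoidAlgebra.single ((i : ℕ) : ZMod (2^n)) (1 : F) +
        AddMonoidAlgebra.single (((2^(n-1) : ℕ) : ZMod (2^n)) - (i : ZMod (2^n))) (1 : F)) *
      (1 + AddMonoidAlgebra.single ((2^(n-1) : ℕ) : ZMod (2^n)) (1 : F))) := by
  set h : ZMod (2 ^ n) := ((2 ^ (n - 1) : ℕ) : ZMod (2 ^ n))
  have h_add_h : h + h = 0 := ZMod.natCast_two_pow_pred_add_self (by omega)
  have hc : (2 : ZMod (2 ^ n)) ^ (n - 1) - 1 = h - 1 := by simp [h]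
  have hσh : (h - 1) * h = h := by
    rw [sub_mul, one_mul, ZMod.natCast_two_pow_pred_mul_self (by omega), zero_sub,
      neg_eq_of_add_eq_zero_left h_add_h]
  have hσi : (h - 1) * (i : ZMod (2 ^ n)) = -i + i • h := by rw [nsmul_eq_mul]; ring
  have hx : α • (single (i : ZMod (2 ^ n)) 1 + single ((2 ^ (n - 1) + i : ℕ) : ZMod (2 ^ n)) 1) =
      single (i : ZMod (2 ^ n)) α * (1 + single h 1) := by
    rw [smul_add, smul_single', smul_single', mul_add, mul_one, mul_one, single_mul_single,
      mul_one, Nat.cast_add, add_comm h]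
  have hσx : sigma F n (h - 1) (1 + single (i : ZMod (2 ^ n)) α * (1 + single h 1)) =
      1 + single (-i : ZMod (2 ^ n)) α * (1 + single h 1) := by
    rw [map_add, map_one, map_mul, map_add, map_one, sigma_single, sigma_single, hσh, hσi,
      single_add_nsmul_mul_one_add_single h_add_h]
  have hrhs : α • ((single (i : ZMod (2 ^ n)) 1 + single (h - i) 1) * (1 + single h 1)) =
      (single (i : ZMod (2 ^ n)) α + single (-i : ZMod (2 ^ n)) α) * (1 + single h 1) := by
    rw [← smul_mul_assoc, smul_add, smul_single', smul_single', mul_one, add_mul, add_mul,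
      sub_eq_neg_add, single_add_mul_one_add_single h_add_h]
  rw [hx, hc, hσx, hrhs, one_add_mul_mul_one_add_mul_of_mul_self_eq_zero
    (AddMonoidAlgebra.one_add_single_mul_self h_add_h)]

/-- For `σ₃ : a ↦ a^{2^{n-1}-1}`, `Ĥ = 1 + a^{2^{n-1}}`, `α ∈ F` and
`1 ≤ i ≤ 2^{n-2}-1`, the element `x = 1 + α(a^i + a^{2^{n-1}+i})` satisfies
`x ⬝ x^{σ₃} = 1 + α(a^i + a^{2^{n-1}-i}) ⬝ Ĥ`. -/
theorem sigma3_generator_formula (F : Type) [Field F] [Fintype F] (hF : CharP F 2)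
    (n : ℕ) (hn : 2 < n) (α : F) (i : ℕ) (hi1 : 1 ≤ i) (hi2 : i ≤ 2^(n-2) - 1) :
    (1 + α • (AddMonoidAlgebra.single ((i : ℕ) : ZMod (2^n)) (1 : F) +
        AddMonoidAlgebra.single ((2^(n-1) + i : ℕ) : ZMod (2^n)) (1 : F))) *
      sigma F n (2^(n-1) - 1)
        (1 + α • (AddMonoidAlgebra.single ((i : ℕ) : ZMod (2^n)) (1 : F) +
          AddMonoidAlgebra.single ((2^(n-1) + i : ℕ) : ZMod (2^n)) (1 : F))) =
    1 + α • ((AddMonoidAlgebra.single ((i : ℕ) : ZMod (2^n)) (1 : F) +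
        AddMonoidAlgebra.single (((2^(n-1) : ℕ) : ZMod (2^n)) - (i : ZMod (2^n))) (1 : F)) *
      (1 + AddMonoidAlgebra.single ((2^(n-1) : ℕ) : ZMod (2^n)) (1 : F))) :=
  sigma3_generator_formula_general F hF n hn α i
end
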